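/- For any constants ω₁₂, ω₂₃, ω₁₃ ∈ ℂ, the polynomial C = u² + v² + w² − uvw + ω₁₂·u + ω₂₃·v + ω₁₃·w is a central element of the abstract Poisson algebra with bracket {u,v} = uv − 2w − ω₁₃, {v,w} = vw − 2u − ω₁₂, {w,u} = wu − 2v − ω₂₃: one has {C, f} = 0 for every polynomial f ∈ ℂ[u,v,w] (equivalently, {C,u} = {C,v} = {C,w} = 0). -/
import Mathlib


open MvPolynomial

/-- The bracket on `ℂ[u,v,w]` (with `u = X 0`, `v = X 1`, `w = X 2`) defined as
the biderivation with `{u,v} = uv − 2w − ω₁₃`, `{v,w} = vw − 2u − ω₁₂`,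
`{w,u} = wu − 2v − ω₂₃`. -/
noncomputable def d4Bracket (ω₁₂ ω₂₃ ω₁₃ : ℂ) (f g : MvPolynomial (Fin 3) ℂ) :
    MvPolynomial (Fin 3) ℂ :=
  (X 0 * X 1 - 2 * X 2 - C ω₁₃) * (pderiv 0 f * pderiv 1 g - pderiv 1 f * pderiv 0 g)
  + (X 1 * X 2 - 2 * X 0 - C ω₁₂) * (pderiv 1 f * pderiv 2 g - pderiv 2 f * pderiv 1 g)
  + (X 2 * X 0 - 2 * X 1 - C ω₂₃) * (pderiv 2 f * pderiv 0 g - pderiv 0 f * pderiv 2 g)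

/-- The polynomial `C = u² + v² + w² − uvw + ω₁₂ u + ω₂₃ v + ω₁₃ w` is a central
element of the Poisson algebra: `{C, f} = 0` for every polynomial `f`. -/
theorem d4_casimir_central (ω₁₂ ω₂₃ ω₁₃ : ℂ) (f : MvPolynomial (Fin 3) ℂ) :
    d4Bracket ω₁₂ ω₂₃ ω₁₃
      (X 0 ^ 2 + X 1 ^ 2 + X 2 ^ 2 - X 0 * X 1 * X 2
        + C ω₁₂ * X 0 + C ω₂₃ * X 1 + C ω₁₃ * X 2) f = 0 := by
  unfold d4Bracket
  simp only [map_add, map_sub, map_mul, pderiv_X, pderiv_C, Derivation.leibniz, pderiv_pow,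
    smul_eq_mul]
  simp [Pi.single_apply, Fin.ext_iff]
  ring
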